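/- Let V be a vector space over a field K of characteristic zero with a bilinear (magmatic) product * : V × V → V, and let * also denote its unique extension to the tensor algebra T(V). Then for every n ≥ 1, all v₁, …, vₙ ∈ V and every v ∈ V: (v₁·…·vₙ) * v = Σ_{i=1}^{n} v₁·…·v_{i−1}·(vᵢ * v)·v_{i+1}·…·vₙ. -/
import Mathlib


open TensorProduct

/-- The counit of the tensor algebra `T(V)`: the unique algebra morphism `T(V) → K`
vanishing on `V`. -/
noncomputable def taCounit (K V : Type*) [Field K] [AddCommGroup V] [Module K V] :
    TensorAlgebra K V →ₐ[K] K :=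
  TensorAlgebra.lift K (0 : V →ₗ[K] K)

/-- The unshuffle coproduct of the tensor algebra `T(V)`: the unique algebra morphism
`T(V) → T(V) ⊗ T(V)` with `Δ(v) = v ⊗ 1 + 1 ⊗ v` for `v ∈ V`. -/
noncomputable def taComul (K V : Type*) [Field K] [AddCommGroup V] [Module K V] :
    TensorAlgebra K V →ₐ[K] TensorAlgebra K V ⊗[K] TensorAlgebra K V :=
  TensorAlgebra.lift K
    (((TensorProduct.mk K (TensorAlgebra K V) (TensorAlgebra K V)).flip 1
        + TensorProduct.mk K (TensorAlgebra K V) (TensorAlgebra K V) 1)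
      ∘ₗ TensorAlgebra.ι K)

/-- Let `B` be the unique extension to `T(V)` of a magmatic product `m`
on `V` (characterized by properties (i)–(vii)).  Then for every word `v₀ ⋯ vₙ` and every
`v ∈ V`, `(v₀ ⋯ vₙ) * v = Σᵢ v₀ ⋯ (vᵢ * v) ⋯ vₙ`. -/
theorem statement18 {K V : Type*} [Field K] [CharZero K] [AddCommGroup V] [Module K V]
    (m : V →ₗ[K] V →ₗ[K] V)
    (B : TensorAlgebra K V →ₗ[K] TensorAlgebra K V →ₗ[K] TensorAlgebra K V)
    (hagree : ∀ v w : V, B (TensorAlgebra.ι K v) (TensorAlgebra.ι K w)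
        = TensorAlgebra.ι K (m v w))
    (hcounit : ∀ f g, taCounit K V (B f g) = taCounit K V f * taCounit K V g)
    (hcomul : ∀ f g, taComul K V (B f g)
        = TensorProduct.map₂ B B (taComul K V f) (taComul K V g))
    (hone : ∀ f, B f 1 = f)
    (hone' : ∀ f, B 1 f = taCounit K V f • (1 : TensorAlgebra K V))
    (hword : ∀ f g (y : V), B f (g * TensorAlgebra.ι K y)
        = B (B f g) (TensorAlgebra.ι K y) - B f (B g (TensorAlgebra.ι K y)))
    (hmul : ∀ f g h, B (f * g) h
        = TensorProduct.lift
            ((LinearMap.mul K (TensorAlgebra K V)).compl₁₂ (B f) (B g))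
            (taComul K V h))
    (hBB : ∀ f g h, B (B f g) h
        = B f (TensorProduct.lift
            ((LinearMap.mul K (TensorAlgebra K V)).compl₁₂ (B g) LinearMap.id)
            (taComul K V h))) :
    ∀ (n : ℕ) (v : Fin (n + 1) → V) (w : V),
      B ((List.ofFn fun i => TensorAlgebra.ι K (v i)).prod) (TensorAlgebra.ι K w)
        = ∑ i : Fin (n + 1),
            (List.ofFn fun j =>
              if j = i then TensorAlgebra.ι K (m (v j) w) else TensorAlgebra.ι K (v j)).prod := by

  have hcw : ∀ w : V, taComul K V (TensorAlgebra.ι K w)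
      = TensorAlgebra.ι K w ⊗ₜ[K] 1 + 1 ⊗ₜ[K] TensorAlgebra.ι K w := by
    intro w
    simp [taComul, TensorAlgebra.lift_ι_apply]
  have der : ∀ (f g : TensorAlgebra K V) (w : V),
      B (f * g) (TensorAlgebra.ι K w)
        = B f (TensorAlgebra.ι K w) * g + f * B g (TensorAlgebra.ι K w) := by
    intro f g w
    rw [hmul, hcw]
    simp [hone]
  intro n
  induction n with
  | zero =>
    intro v w
    simp [List.ofFn_succ, hagree]
  | succ n ih =>
    intro v w
    have hsplit : (List.ofFn fun i : Fin (n+2) => TensorAlgebra.ι K (v i)).prod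
        = TensorAlgebra.ι K (v 0)
          * (List.ofFn fun i : Fin (n+1) => TensorAlgebra.ι K (v i.succ)).prod := by
      rw [List.ofFn_succ, List.prod_cons]
    have h0 : (List.ofFn fun j : Fin (n+2) =>
          if j = 0 then TensorAlgebra.ι K (m (v j) w) else TensorAlgebra.ι K (v j)).prod
        = TensorAlgebra.ι K (m (v 0) w)
          * (List.ofFn fun i : Fin (n+1) => TensorAlgebra.ι K (v i.succ)).prod := by
      rw [List.ofFn_succ, List.prod_cons]
      simp [Fin.succ_ne_zero]
    have hs : ∀ i : Fin (n+1), (List.ofFn fun j : Fin (n+2) =>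
          if j = i.succ then TensorAlgebra.ι K (m (v j) w) else TensorAlgebra.ι K (v j)).prod
        = TensorAlgebra.ι K (v 0)
          * (List.ofFn fun j : Fin (n+1) =>
              if j = i then TensorAlgebra.ι K (m (v j.succ) w)
              else TensorAlgebra.ι K (v j.succ)).prod := by
      intro i
      rw [List.ofFn_succ, List.prod_cons]
      simp [(Fin.succ_ne_zero i).symm, Fin.succ_inj]
    rw [hsplit, der, hagree, ih (fun i => v i.succ) w, Finset.mul_sum]
    conv_rhs => rw [Fin.sum_univ_succ]
    rw [h0]
    simp only [hs]
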